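/- arXiv:2103.13715 — 2 statements merged into one kernel-verified Lean document; each statement's English description precedes it below -/
import Mathlib

section
/- Define G_{1,n−1}^{α,β} = (1/n!) ∑_{j=0}^{n} (−1)^j C(n,j) p(α+j) F_{n−1}^β(α+j) and G_{2,n−1}^{α,β} = −(1/(n−1)!) ∑_{j=0}^{n−1} (−1)^j C(n−1,j) p(α+j) F_n^β(α+j), where F_m^β(x) = ∏_{k=0}^{m} 1/(x−β−k). If deg p ≤ 2n−1 then G_{1,n−1}^{α,β} + G_{2,n−1}^{β,α} = 0. -/
/-!
The nodes `α, α + 1, …, α + a` and `β, β + 1, …, β + b` are distinct because `α - β ∉ ℤ`, so for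
`deg p < a + b + 1` the coefficient of `X ^ (a + b + 1)` in the Lagrange interpolant of `p` on
them, `∑ᵢ p(xᵢ) / ∏_{j ≠ i} (xᵢ - xⱼ)`, vanishes. Within a block the differences are integers and
give the weights `(-1) ^ (a + j) * a.choose j / a !`, while the differences to the other block
give `F_b`. With `a = n`, `b = n - 1` the two halves of the sum are `(-1) ^ n` times `G₁` and `G₂`.
-/

/-- `F_m^β(x) = ∏_{k=0}^{m} 1/(x−β−k)` (a product of `m+1` factors). -/
noncomputable def Ffun (m : ℕ) (β x : ℝ) : ℝ :=
  ∏ k ∈ Finset.range (m + 1), (1 / (x - β - (k : ℝ)))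

/-- `G_{1,n−1}^{α,β} = (1/n!) ∑_{j=0}^{n} (−1)^j C(n,j) p(α+j) F_{n−1}^β(α+j)`. -/
noncomputable def G1 (n : ℕ) (p : Polynomial ℝ) (α β : ℝ) : ℝ :=
  (1 / (Nat.factorial n : ℝ)) *
    ∑ j ∈ Finset.range (n + 1), (-1 : ℝ) ^ j * (Nat.choose n j : ℝ) *
      p.eval (α + (j : ℝ)) * Ffun (n - 1) β (α + (j : ℝ))

/-- `G_{2,n−1}^{α,β} = −(1/(n−1)!) ∑_{j=0}^{n−1} (−1)^j C(n−1,j) p(α+j) F_n^β(α+j)`. -/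
noncomputable def G2 (n : ℕ) (p : Polynomial ℝ) (α β : ℝ) : ℝ :=
  -((1 / (Nat.factorial (n - 1) : ℝ)) *
    ∑ j ∈ Finset.range n, (-1 : ℝ) ^ j * (Nat.choose (n - 1) j : ℝ) *
      p.eval (α + (j : ℝ)) * Ffun n β (α + (j : ℝ)))

open Polynomial Finset Nat

namespace Lagrange

theorem sum_eval_div_prod_erase_eq_zero {F ι : Type*} [Field F] [DecidableEq ι] {s : Finset ι}
    {v : ι → F} (hvs : Set.InjOn v s) {P : F[X]} (hP : P.degree < ↑(#s - 1)) :
    ∑ i ∈ s, P.eval (v i) / ∏ j ∈ s.erase i, (v i - v j) = 0 := by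
  have hP' : P.degree < #s := hP.trans_le (by exact_mod_cast Nat.sub_le _ _)
  rw [← coeff_eq_sum hvs hP', coeff_eq_zero_of_degree_lt hP]

end Lagrange

theorem Finset.prod_erase_range_natCast_sub {R : Type*} [CommRing R] {n j : ℕ} (hj : j ≤ n) :
    ∏ i ∈ (range (n + 1)).erase j, ((j : R) - i) = (-1) ^ (n + j) * (j ! * (n - j)! : ℕ) := by
  induction n, hj using Nat.le_induction with
  | base =>
    rw [range_add_one, erase_insert notMem_range_self, prod_range_natCast_sub,
      ← Nat.descFactorial_eq_prod_range, Nat.descFactorial_self, ← two_mul, pow_mul]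
    simp
  | succ m hjm ih =>
    rw [range_add_one, erase_insert_of_ne (by omega), prod_insert (by simp), ih,
      Nat.succ_sub hjm, Nat.factorial_succ]
    push_cast [Nat.cast_sub hjm]
    ring

theorem Finset.disjSum_erase_inl {ι κ : Type*} [DecidableEq ι] [DecidableEq κ]
    (s : Finset ι) (t : Finset κ) (i : ι) :
    (s.disjSum t).erase (Sum.inl i) = (s.erase i).disjSum t := by
  ext (x | x) <;> simp

theorem Finset.disjSum_erase_inr {ι κ : Type*} [DecidableEq ι] [DecidableEq κ]
    (s : Finset ι) (t : Finset κ) (k : κ) :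
    (s.disjSum t).erase (Sum.inr k) = s.disjSum (t.erase k) := by
  ext (x | x) <;> simp

theorem Ffun_eq_inv_prod (m : ℕ) (β x : ℝ) :
    Ffun m β x = (∏ k ∈ range (m + 1), (x - (β + k)))⁻¹ := by
  simp only [Ffun, one_div, prod_inv_distrib, sub_add_eq_sub_sub]

noncomputable def progressionSum (a b : ℕ) (p : ℝ[X]) (α β : ℝ) : ℝ :=
  (1 / (a ! : ℝ)) *
    ∑ j ∈ range (a + 1), (-1 : ℝ) ^ j * (a.choose j : ℝ) * p.eval (α + j) * Ffun b β (α + j)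

theorem G1_eq_progressionSum (n : ℕ) (p : ℝ[X]) (α β : ℝ) :
    G1 n p α β = progressionSum n (n - 1) p α β :=
  rfl

theorem G2_eq_neg_progressionSum {n : ℕ} (hn : 1 ≤ n) (p : ℝ[X]) (α β : ℝ) :
    G2 n p α β = -progressionSum (n - 1) n p α β := by
  rw [G2, progressionSum, Nat.sub_add_cancel hn]

theorem inv_prod_sub_progressions {a j : ℕ} (hj : j ≤ a) (b : ℕ) (α β : ℝ) :
    ((∏ i ∈ (range (a + 1)).erase j, (α + j - (α + i))) *
        ∏ k ∈ range (b + 1), (α + j - (β + k)))⁻¹ =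
      (-1) ^ a * (1 / a ! * ((-1) ^ j * a.choose j * Ffun b β (α + j))) := by
  simp only [add_sub_add_left_eq_sub]
  rw [prod_erase_range_natCast_sub hj, Ffun_eq_inv_prod, Nat.cast_choose ℝ hj, pow_add]
  push_cast
  field_simp
  simp [← pow_mul, pow_mul', div_eq_inv_mul]

theorem sum_eval_div_prod_progressions (a b : ℕ) (p : ℝ[X]) (α β : ℝ) :
    let v : ℕ ⊕ ℕ → ℝ := Sum.elim (fun i ↦ α + i) (fun k ↦ β + k)
    ∑ x ∈ (range (a + 1)).disjSum (range (b + 1)),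
        p.eval (v x) / ∏ y ∈ ((range (a + 1)).disjSum (range (b + 1))).erase x, (v x - v y) =
      (-1) ^ a * progressionSum a b p α β + (-1) ^ b * progressionSum b a p β α := by
  intro v
  rw [sum_disjSum, progressionSum, progressionSum, mul_sum, mul_sum, mul_sum, mul_sum]
  congr 1 <;> refine sum_congr rfl fun j hj ↦ ?_
  · rw [disjSum_erase_inl, prod_disjSum, div_eq_mul_inv]
    simp only [v, Sum.elim_inl, Sum.elim_inr]
    rw [inv_prod_sub_progressions (mem_range_succ_iff.mp hj)]
    ring
  · rw [disjSum_erase_inr, prod_disjSum, div_eq_mul_inv, mul_comm (∏ _ ∈ _, _)]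
    simp only [v, Sum.elim_inl, Sum.elim_inr]
    rw [inv_prod_sub_progressions (mem_range_succ_iff.mp hj)]
    ring

theorem progressionSum_add_progressionSum_eq_zero {a b : ℕ} {p : ℝ[X]}
    (hp : p.degree < ↑(a + b + 1)) {α β : ℝ} (hαβ : ∀ m : ℤ, α - β ≠ m) :
    (-1) ^ a * progressionSum a b p α β + (-1) ^ b * progressionSum b a p β α = 0 := by
  have hv : Function.Injective (Sum.elim (fun i : ℕ ↦ α + i) (fun k : ℕ ↦ β + k)) := by
    refine ((add_right_injective α).comp Nat.cast_injective).sumElim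
      ((add_right_injective β).comp Nat.cast_injective) fun i k h ↦ hαβ (k - i) ?_
    push_cast
    simp only [Function.comp_apply] at h
    linarith
  rw [← sum_eval_div_prod_progressions]
  exact Lagrange.sum_eval_div_prod_erase_eq_zero hv.injOn (by simpa [add_right_comm] using hp)

/-- If `deg p ≤ 2n−1` and `α − β ∉ ℤ`, then `G_{1,n−1}^{α,β} + G_{2,n−1}^{β,α} = 0`. -/
theorem G1_add_G2_eq_zero (n : ℕ) (hn : 1 ≤ n) (p : Polynomial ℝ)
    (hp : p.degree ≤ (2 * n - 1 : ℕ))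
    (α β : ℝ) (hαβ : ∀ m : ℤ, α - β ≠ (m : ℝ)) :
    G1 n p α β + G2 n p β α = 0 := by
  have hdeg : p.degree < ↑(n + (n - 1) + 1) := hp.trans_lt (by exact_mod_cast (by omega))
  have hsum := progressionSum_add_progressionSum_eq_zero hdeg hαβ
  have hsign : (-1 : ℝ) ^ (n - 1) = -(-1) ^ n := by
    conv_rhs => rw [← Nat.sub_add_cancel hn, pow_succ]
    ring
  rw [G1_eq_progressionSum, G2_eq_neg_progressionSum hn, ← sub_eq_add_neg]
  refine mul_left_cancel₀ (pow_ne_zero n (by norm_num : (-1 : ℝ) ≠ 0)) ?_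
  linear_combination hsum - progressionSum (n - 1) n p β α * hsign
end

section
/- The value of the monic Jacobi–Piñeiro type II multiple orthogonal polynomial at x = 0 is B_{(n,m)}(0) = (−1)^{n+m} (α+1)_n (β+1)_m / ((α+γ+m+n+1)_n (β+γ+m+n+1)_m). -/
/-- The Pochhammer symbol `(z)_k = z(z+1)⋯(z+k−1)`. -/
noncomputable def poch (z : ℝ) (k : ℕ) : ℝ := ∏ i ∈ Finset.range k, (z + (i : ℝ))

/-- Coefficients of the Jacobi–Piñeiro type II polynomial. -/
noncomputable def JPcoef (α β γ : ℝ) (n m k j : ℕ) : ℝ :=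
  poch (γ + j + k + 1) (m - j) * poch (γ + k + m + 1) (n - k) *
    poch (α - k + n + 1) k * poch (β - j - k + m + n + 1) j /
  ((Nat.factorial j : ℝ) * (Nat.factorial k : ℝ) *
    (Nat.factorial (m - j) : ℝ) * (Nat.factorial (n - k) : ℝ))

/-- The normalization constant `N_{n,m}`. -/
noncomputable def JPnorm (α β γ : ℝ) (n m : ℕ) : ℝ :=
  (Nat.factorial n : ℝ) * (Nat.factorial m : ℝ) /
    (poch (α + γ + n + m + 1) n * poch (β + γ + n + m + 1) m)

/-- The monic Jacobi–Piñeiro type II multiple orthogonal polynomial. -/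
noncomputable def JP (α β γ : ℝ) (n m : ℕ) (x : ℝ) : ℝ :=
  JPnorm α β γ n m *
    ∑ k ∈ Finset.range (n + 1), ∑ j ∈ Finset.range (m + 1),
      JPcoef α β γ n m k j * (x - 1) ^ (j + k) * x ^ (n + m - j - k)

/-!
At `x = 0` every term of the double sum carries a positive power of `x` except the one with
`k = n`, `j = m`. In that coefficient the Pochhammer factors in `γ` have length zero, the other
two reduce to `(α + 1)_n` and `(β + 1)_m`, and its factorials cancel those of `N_{n,m}`.
-/

open Finset Nat

lemma poch_zero (z : ℝ) : poch z 0 = 1 := by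
  simp [poch]

lemma sum_range_sum_range_mul_zero_pow {R : Type*} [Semiring R] (n m : ℕ)
    (f : ℕ → ℕ → R) :
    ∑ k ∈ range (n + 1), ∑ j ∈ range (m + 1), f k j * 0 ^ (n + m - j - k) = f n m := by
  rw [sum_eq_single_of_mem n (self_mem_range_succ n) fun k hk hkn =>
      sum_eq_zero fun j hj => by
        rw [mem_range] at hk hj
        rw [zero_pow (by omega), mul_zero],
    sum_eq_single_of_mem m (self_mem_range_succ m) fun j hj hjm => by
      rw [mem_range] at hj
      rw [zero_pow (by omega), mul_zero],
    show n + m - m - n = 0 by omega, pow_zero, mul_one]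

lemma JP_at_zero (α β γ : ℝ) (n m : ℕ) :
    JP α β γ n m 0 = JPnorm α β γ n m * (JPcoef α β γ n m n m * (-1) ^ (m + n)) := by
  rw [JP, sum_range_sum_range_mul_zero_pow n m
    fun k j => JPcoef α β γ n m k j * (0 - 1 : ℝ) ^ (j + k), zero_sub]

lemma JPcoef_self (α β γ : ℝ) (n m : ℕ) :
    JPcoef α β γ n m n m = poch (α + 1) n * poch (β + 1) m / ((m ! : ℝ) * n !) := by
  have hα : α - n + n + 1 = α + 1 := by ring
  have hβ : β - m - n + m + n + 1 = β + 1 := by ring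
  simp only [JPcoef, Nat.sub_self, poch_zero, Nat.factorial_zero, Nat.cast_one, hα, hβ]
  ring

theorem jacobi_pineiro_value_at_zero_general (n m : ℕ) (α β γ : ℝ) :
    JP α β γ n m 0
      = (-1 : ℝ) ^ (n + m) * poch (α + 1) n * poch (β + 1) m /
          (poch (α + γ + m + n + 1) n * poch (β + γ + m + n + 1) m) := by
  have hn : (n ! : ℝ) ≠ 0 := mod_cast n.factorial_ne_zero
  have hm : (m ! : ℝ) ≠ 0 := mod_cast m.factorial_ne_zero
  have hαγ : α + γ + n + m + 1 = α + γ + m + n + 1 := by ring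
  have hβγ : β + γ + n + m + 1 = β + γ + m + n + 1 := by ring
  rw [JP_at_zero, JPcoef_self, JPnorm, hαγ, hβγ, add_comm m n]
  field_simp

/-- `B_{(n,m)}(0) = (−1)^{n+m} (α+1)_n (β+1)_m /((α+γ+m+n+1)_n (β+γ+m+n+1)_m)`. -/
theorem jacobi_pineiro_value_at_zero (n m : ℕ) (α β γ : ℝ)
    (hα : -1 < α) (hβ : -1 < β) (hγ : -1 < γ) :
    JP α β γ n m 0
      = (-1 : ℝ) ^ (n + m) * poch (α + 1) n * poch (β + 1) m /
          (poch (α + γ + m + n + 1) n * poch (β + γ + m + n + 1) m) :=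
  jacobi_pineiro_value_at_zero_general n m α β γ
end
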